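/- Let P₁,…,Pₘ be independent uniform [0,1] random variables and let P₍₁₎ ≤ ⋯ ≤ P₍ₘ₎ be their order statistics. Then under the global null, the Benjamini–Hochberg procedure at level α (rejecting if ∃ k with P₍ₖ₎ ≤ αk/m) rejects with probability exactly α. -/

import Mathlib

/-!
Let `R` be the number of BH rejections. On `{R = k}` exactly `k` of the p-values lie below
`αk/m`, so `k ℙ(R = k) = ∑ᵢ ℙ(Pᵢ ≤ αk/m, R = k)`. When `Pᵢ ≤ αk/m`, the event `R = k` does not
change if `Pᵢ` is replaced by `0`; the resulting rank `Rᵢ` is independent of `Pᵢ`, hence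
`ℙ(R = k) = (α/m) ∑ᵢ ℙ(Rᵢ = k)`. Summing over `k ≥ 1` and using `Rᵢ ≥ 1` gives
`ℙ(R ≥ 1) = (α/m) m = α`.
-/

open MeasureTheory Set ProbabilityTheory Finset
open scoped ENNReal

section StepUp

variable {ι : Type*} [Fintype ι]

noncomputable def countLE (x : ι → ℝ) (t : ℝ) : ℕ := #{i | x i ≤ t}

/-- The number of rejections of the step-up procedure with critical values `c 1 ≤ ⋯ ≤ c n`. -/
noncomputable def stepUpRank (c : ℕ → ℝ) (x : ι → ℝ) : ℕ :=
  Nat.findGreatest (fun k => k ≤ countLE x (c k)) (Fintype.card ι)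

variable {c : ℕ → ℝ} {x : ι → ℝ}

lemma countLE_mono (x : ι → ℝ) : Monotone (countLE x) := fun _ _ hst =>
  card_le_card <| monotone_filter_right _ fun _ _ h => h.trans hst

lemma countLE_le_card (x : ι → ℝ) (t : ℝ) : countLE x t ≤ Fintype.card ι := card_filter_le _ _

lemma countLE_update_of_le [DecidableEq ι] {i : ι} {y t : ℝ} (hx : x i ≤ t) (hy : y ≤ t) :
    countLE (Function.update x i y) t = countLE x t := by
  unfold countLE
  congr 1
  refine filter_congr fun j _ => ?_
  rcases eq_or_ne j i with rfl | hj
  · simp [hx, hy]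
  · simp [hj]

lemma measurable_countLE (t : ℝ) : Measurable fun x : ι → ℝ => countLE x t := by
  simp only [countLE, card_filter]
  exact Finset.measurable_sum _ fun i _ =>
    Measurable.ite (measurableSet_le (measurable_pi_apply i) measurable_const)
      measurable_const measurable_const

lemma measurable_stepUpRank (c : ℕ → ℝ) : Measurable (stepUpRank (ι := ι) c) :=
  measurable_findGreatest fun _ _ => measurableSet_le measurable_const (measurable_countLE _)

lemma stepUpRank_le_card (c : ℕ → ℝ) (x : ι → ℝ) : stepUpRank c x ≤ Fintype.card ι :=
  Nat.findGreatest_le _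

lemma countLE_stepUpRank (hc : Monotone c) (x : ι → ℝ) :
    countLE x (c (stepUpRank c x)) = stepUpRank c x := by
  refine le_antisymm (not_lt.1 fun hlt => ?_)
    (Nat.findGreatest_spec (P := fun k => k ≤ countLE x (c k)) (Nat.zero_le _) (Nat.zero_le _))
  have hR : stepUpRank c x < Fintype.card ι := hlt.trans_le (countLE_le_card _ _)
  exact Nat.findGreatest_is_greatest (Nat.lt_succ_self _) hR
    (hlt.trans_le (countLE_mono x (hc (Nat.le_succ _))))

lemma stepUpRank_pos_iff :
    0 < stepUpRank c x ↔ ∃ k < Fintype.card ι, k + 1 ≤ countLE x (c (k + 1)) := by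
  rw [Nat.pos_iff_ne_zero, Ne, stepUpRank, Nat.findGreatest_eq_zero_iff]
  push Not
  constructor
  · rintro ⟨k, hk, hkn, h⟩
    exact ⟨k - 1, by omega, by rwa [Nat.sub_add_cancel hk]⟩
  · rintro ⟨k, hk, h⟩
    exact ⟨k + 1, k.succ_pos, hk, h⟩

lemma stepUpRank_pos_of_le {i : ι} (hi : x i ≤ c 1) : 0 < stepUpRank c x := by
  refine stepUpRank_pos_iff.2 ⟨0, Fintype.card_pos_iff.2 ⟨i⟩, ?_⟩
  exact card_pos.2 ⟨i, mem_filter.2 ⟨mem_univ _, hi⟩⟩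

lemma stepUpRank_update_eq_iff [DecidableEq ι] (hc : Monotone c) {i : ι} {y : ℝ} {k : ℕ}
    (hx : x i ≤ c k) (hy : y ≤ c k) :
    stepUpRank c (Function.update x i y) = k ↔ stepUpRank c x = k := by
  -- Whether the rank is `k` only depends on the counts at thresholds `c j`, `j ≥ k`, and those
  -- do not notice the change of coordinate `i`.
  have heq : ∀ j, k ≤ j → countLE (Function.update x i y) (c j) = countLE x (c j) := fun j hj =>
    countLE_update_of_le (hx.trans (hc hj)) (hy.trans (hc hj))
  simp only [stepUpRank, Nat.findGreatest_eq_iff]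
  refine and_congr_right fun _ => and_congr (imp_congr_right fun _ => by rw [heq k le_rfl])
    (forall_congr' fun j => imp_congr_right fun hkj => imp_congr_right fun _ => ?_)
  rw [heq j hkj.le]

end StepUp

section BHCritical

noncomputable def bhCrit (α : ℝ) (n k : ℕ) : ℝ := α * k / n

variable {α : ℝ} {n : ℕ}

lemma bhCrit_nonneg (hα : 0 ≤ α) (k : ℕ) : 0 ≤ bhCrit α n k := by
  unfold bhCrit
  positivity

lemma bhCrit_mono (hα : 0 ≤ α) : Monotone (bhCrit α n) := fun a b hab => by
  unfold bhCrit
  gcongr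

lemma bhCrit_le_one (hα : α ≤ 1) {k : ℕ} (hk : k ≤ n) : bhCrit α n k ≤ 1 :=
  div_le_one_of_le₀ ((mul_le_of_le_one_left k.cast_nonneg hα).trans (Nat.cast_le.2 hk))
    n.cast_nonneg

lemma ofReal_bhCrit (k : ℕ) :
    ENNReal.ofReal (bhCrit α n k) = k * ENNReal.ofReal (α / n) := by
  rw [← ENNReal.ofReal_natCast, ← ENNReal.ofReal_mul k.cast_nonneg, bhCrit]
  ring_nf

end BHCritical

section Probability

variable {Ω : Type*} [MeasurableSpace Ω] {μ : Measure Ω}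

open scoped Classical in
lemma natCast_mul_measure_eq_sum_measure_inter {ι : Type*} [Fintype ι] {E : Set Ω}
    {F : ι → Set Ω} (hE : MeasurableSet E) (hF : ∀ i, MeasurableSet (F i)) {k : ℕ}
    (hk : ∀ ω ∈ E, #{i | ω ∈ F i} = k) :
    (k : ℝ≥0∞) * μ E = ∑ i, μ (E ∩ F i) := by
  calc (k : ℝ≥0∞) * μ E = ∫⁻ _ in E, (k : ℝ≥0∞) ∂μ := (setLIntegral_const E _).symm
    _ = ∫⁻ ω in E, ∑ i, (F i).indicator 1 ω ∂μ := by
      refine setLIntegral_congr_fun hE fun ω hω => ?_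
      rw [← hk ω hω, card_filter]
      simp [Set.indicator_apply]
    _ = ∑ i, μ (E ∩ F i) := by
      rw [lintegral_finsetSum _ fun i _ => measurable_one.indicator (hF i)]
      refine sum_congr rfl fun i _ => ?_
      rw [lintegral_indicator_one (hF i), Measure.restrict_apply (hF i), Set.inter_comm]

lemma measure_le_eq_ofReal_of_map_eq_uniform {X : Ω → ℝ} (hX : Measurable X)
    (h : μ.map X = volume.restrict (Set.Icc 0 1)) {t : ℝ} (ht : t ∈ Set.Icc 0 1) :
    μ {ω | X ω ≤ t} = ENNReal.ofReal t := by
  change μ (X ⁻¹' Iic t) = _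
  rw [← Measure.map_apply hX measurableSet_Iic, h, Measure.restrict_apply measurableSet_Iic,
    Set.inter_comm]
  have hIcc : Set.Icc 0 1 ∩ Set.Iic t = Set.Icc 0 t := by
    ext s
    simp only [Set.mem_inter_iff, Set.mem_Icc, Set.mem_Iic]
    exact ⟨fun h => ⟨h.1.1, h.2⟩, fun h => ⟨⟨h.1, h.2.trans ht.2⟩, h.2⟩⟩
  rw [hIcc, Real.volume_Icc, sub_zero]

lemma ProbabilityTheory.iIndepFun.indepFun_update {ι β : Type*} [Fintype ι] [DecidableEq ι]
    [MeasurableSpace β] {f : ι → Ω → β} (h : iIndepFun f μ) (hf : ∀ i, Measurable (f i))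
    (i : ι) (y : β) : IndepFun (f i) (fun ω => Function.update (fun j => f j ω) i y) μ := by
  convert (h.indepFun_finset {i} (univ.erase i) (by simp) hf).comp
    (measurable_pi_apply ⟨i, mem_singleton_self i⟩)
    (measurable_updateFinset (x := fun _ => y)) using 1
  · rfl
  · funext ω j
    by_cases hj : j = i <;> simp [hj, Function.updateFinset]

variable {ι : Type*} [Fintype ι] {c : ℕ → ℝ} {P : ι → Ω → ℝ}

lemma natCast_mul_measure_stepUpRank_eq [DecidableEq ι] (hc : Monotone c) (hP : iIndepFun P μ)
    (hmeas : ∀ i, Measurable (P i)) {y : ℝ} {k : ℕ} (hy : y ≤ c k) :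
    (k : ℝ≥0∞) * μ {ω | stepUpRank c (fun j => P j ω) = k} =
      ∑ i, μ {ω | P i ω ≤ c k} *
        μ {ω | stepUpRank c (Function.update (fun j => P j ω) i y) = k} := by
  have hR : Measurable fun ω => stepUpRank c (fun j => P j ω) :=
    (measurable_stepUpRank c).comp (measurable_pi_lambda _ hmeas)
  rw [natCast_mul_measure_eq_sum_measure_inter (E := {ω | stepUpRank c (fun j => P j ω) = k})
    (F := fun i => {ω | P i ω ≤ c k}) (hR (measurableSet_singleton k))
    (fun i => measurableSet_le (hmeas i) measurable_const) fun ω hω => ?_]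
  · refine sum_congr rfl fun i _ => ?_
    have hset : {ω | stepUpRank c (fun j => P j ω) = k} ∩ {ω | P i ω ≤ c k} =
        {ω | P i ω ≤ c k} ∩ {ω | stepUpRank c (Function.update (fun j => P j ω) i y) = k} := by
      ext ω
      simp only [Set.mem_inter_iff, Set.mem_ofPred_eq]
      constructor
      · rintro ⟨hk, hi⟩
        exact ⟨hi, (stepUpRank_update_eq_iff (x := fun j => P j ω) hc hi hy).2 hk⟩
      · rintro ⟨hi, hk⟩
        exact ⟨(stepUpRank_update_eq_iff (x := fun j => P j ω) hc hi hy).1 hk, hi⟩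
    rw [hset]
    exact (hP.indepFun_update hmeas i y).measure_inter_preimage_eq_mul _ _ measurableSet_Iic
      (measurable_stepUpRank c (measurableSet_singleton k))
  · have hk : stepUpRank c (fun j => P j ω) = k := hω
    rw [← hk]
    simpa [countLE] using countLE_stepUpRank hc (fun j => P j ω)

lemma measure_stepUpRank_bhCrit_eq [DecidableEq ι] (hP : iIndepFun P μ)
    (hmeas : ∀ i, Measurable (P i)) (hunif : ∀ i, μ.map (P i) = volume.restrict (Set.Icc 0 1))
    {α : ℝ} (hα : α ∈ Set.Icc 0 1) {k : ℕ} (hk0 : k ≠ 0) (hkn : k ≤ Fintype.card ι) :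
    μ {ω | stepUpRank (bhCrit α (Fintype.card ι)) (fun j => P j ω) = k} =
      ENNReal.ofReal (α / Fintype.card ι) *
        ∑ i, μ {ω | stepUpRank (bhCrit α (Fintype.card ι))
          (Function.update (fun j => P j ω) i 0) = k} := by
  have hkey := natCast_mul_measure_stepUpRank_eq (c := bhCrit α (Fintype.card ι))
    (bhCrit_mono hα.1) hP hmeas (bhCrit_nonneg hα.1 k)
  simp only [measure_le_eq_ofReal_of_map_eq_uniform (hmeas _) (hunif _)
    ⟨bhCrit_nonneg hα.1 k, bhCrit_le_one hα.2 hkn⟩, ofReal_bhCrit, mul_assoc, ← mul_sum] at hkey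
  exact (ENNReal.mul_right_inj (Nat.cast_ne_zero.2 hk0) (ENNReal.natCast_ne_top k)).1 hkey

theorem measure_stepUpRank_bhCrit_pos [Nonempty ι] [IsProbabilityMeasure μ]
    (hP : iIndepFun P μ) (hmeas : ∀ i, Measurable (P i))
    (hunif : ∀ i, μ.map (P i) = volume.restrict (Set.Icc 0 1)) {α : ℝ} (hα : α ∈ Set.Icc 0 1) :
    μ {ω | 0 < stepUpRank (bhCrit α (Fintype.card ι)) (fun j => P j ω)} = ENNReal.ofReal α := by
  classical
  set n := Fintype.card ι
  set c := bhCrit α n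
  let R : Ω → ℕ := fun ω => stepUpRank c (fun j => P j ω)
  let R' : ι → Ω → ℕ := fun i ω => stepUpRank c (Function.update (fun j => P j ω) i 0)
  have hR : Measurable R := (measurable_stepUpRank c).comp (measurable_pi_lambda _ hmeas)
  have hR' (i : ι) : Measurable (R' i) :=
    (measurable_stepUpRank c).comp (measurable_update_left.comp (measurable_pi_lambda _ hmeas))
  have hR_pos : {ω | 0 < R ω} = R ⁻¹' ↑(Finset.Icc 1 n) := by
    ext ω
    simp only [Set.mem_ofPred_eq, Set.mem_preimage, coe_Icc, Set.mem_Icc]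
    exact ⟨fun h => ⟨h, stepUpRank_le_card _ _⟩, fun h => h.1⟩
  have hR'_range (i : ι) : R' i ⁻¹' ↑(Finset.Icc 1 n) = Set.univ := by
    refine Set.eq_univ_of_forall fun ω => ?_
    simp only [Set.mem_preimage, coe_Icc, Set.mem_Icc]
    exact ⟨stepUpRank_pos_of_le (i := i) (by simpa using bhCrit_nonneg hα.1 1),
      stepUpRank_le_card _ _⟩
  have hterm (k : ℕ) (hk : k ∈ Finset.Icc 1 n) :
      μ (R ⁻¹' {k}) = ENNReal.ofReal (α / n) * ∑ i, μ (R' i ⁻¹' {k}) :=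
    measure_stepUpRank_bhCrit_eq hP hmeas hunif hα
      (Nat.one_le_iff_ne_zero.1 (Finset.mem_Icc.1 hk).1) (Finset.mem_Icc.1 hk).2
  calc μ {ω | 0 < R ω} = ∑ k ∈ Finset.Icc 1 n, μ (R ⁻¹' {k}) := by
        rw [hR_pos, sum_measure_preimage_singleton _ fun k _ => hR (measurableSet_singleton k)]
    _ = ENNReal.ofReal (α / n) * ∑ i, μ (R' i ⁻¹' ↑(Finset.Icc 1 n)) := by
        rw [sum_congr rfl hterm, ← mul_sum, sum_comm]
        congr 1
        exact sum_congr rfl fun i _ =>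
          sum_measure_preimage_singleton _ fun k _ => hR' i (measurableSet_singleton k)
    _ = ENNReal.ofReal α := by
        simp only [hR'_range, measure_univ, sum_const, card_univ, nsmul_eq_mul, mul_one]
        rw [← ENNReal.ofReal_natCast, ← ENNReal.ofReal_mul (div_nonneg hα.1 n.cast_nonneg),
          div_mul_cancel₀ _ (Nat.cast_ne_zero.2 Fintype.card_ne_zero)]

end Probability

/-- Benjamini–Hochberg under the global null: for `m` independent uniform `[0,1]` p-values,
the probability that some order statistic satisfies `P₍ₖ₎ ≤ αk/m` is exactly `α`.
The event `P₍ₖ₎ ≤ t` is expressed as "at least `k` of the p-values are `≤ t`". -/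
theorem bh_global_null_reject_prob
    {Ω : Type*} [MeasurableSpace Ω] (μ : Measure Ω) [IsProbabilityMeasure μ]
    (m : ℕ) (hm : 0 < m) (P : Fin m → Ω → ℝ) (hmeas : ∀ i, Measurable (P i))
    (hindep : iIndepFun P μ)
    (hunif : ∀ i, Measure.map (P i) μ = volume.restrict (Icc (0:ℝ) 1))
    (α : ℝ) (hα : α ∈ Icc (0:ℝ) 1) :
    μ {ω | ∃ k : Fin m,
        (k + 1 : ℕ) ≤ (Finset.univ.filter fun i => P i ω ≤ α * (k + 1) / m).card} =
      ENNReal.ofReal α := by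
  have : Nonempty (Fin m) := ⟨⟨0, hm⟩⟩
  convert measure_stepUpRank_bhCrit_pos hindep hmeas hunif hα using 3 with ω
  simp only [stepUpRank_pos_iff, Fintype.card_fin, countLE, bhCrit, Fin.exists_iff, exists_prop,
    Nat.cast_add, Nat.cast_one]
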